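/- arXiv:0806.0349 — 2 statements merged into one kernel-verified Lean document; each statement's English description precedes it below -/
import Mathlib

section
/- Finite-dimensional version of Lemma 2.3: if F and G are linear operators on H such that α_{Qp}(F) commutes with α_{−Qq}(G) for all p, q ∈ S, then F_Q commutes with G_{−Q}, i.e., F_Q G_{−Q} = G_{−Q} F_Q. -/
open scoped ComplexConjugate

/-- The finite spectral unitary `U(x) = ∑_{p ∈ S} e^{i⟨p,x⟩} E_p`. -/
noncomputable def Uop {d : ℕ} {H : Type*} [NormedAddCommGroup H] [InnerProductSpace ℂ H]
    (S : Finset (Fin d → ℝ)) (E : (Fin d → ℝ) → (H →L[ℂ] H))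
    (B : LinearMap.BilinForm ℝ (Fin d → ℝ)) (x : Fin d → ℝ) : H →L[ℂ] H :=
  ∑ p ∈ S, Complex.exp (Complex.I * (B p x : ℝ)) • E p

/-- The adjoint action `α_x(F) = U(x) F U(x)⁻¹` (note `U(x)⁻¹ = U(−x)`). -/
noncomputable def adAct {d : ℕ} {H : Type*} [NormedAddCommGroup H] [InnerProductSpace ℂ H]
    (S : Finset (Fin d → ℝ)) (E : (Fin d → ℝ) → (H →L[ℂ] H))
    (B : LinearMap.BilinForm ℝ (Fin d → ℝ)) (x : Fin d → ℝ) (F : H →L[ℂ] H) : H →L[ℂ] H :=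
  Uop S E B x * F * Uop S E B (-x)

/-- The warped convolution `F_Q = ∑_{p ∈ S} E_p α_{Qp}(F)`. -/
noncomputable def warp {d : ℕ} {H : Type*} [NormedAddCommGroup H] [InnerProductSpace ℂ H]
    (S : Finset (Fin d → ℝ)) (E : (Fin d → ℝ) → (H →L[ℂ] H))
    (B : LinearMap.BilinForm ℝ (Fin d → ℝ))
    (Q : (Fin d → ℝ) →ₗ[ℝ] (Fin d → ℝ)) (F : H →L[ℂ] H) : H →L[ℂ] H :=
  ∑ p ∈ S, E p * adAct S E B (Q p) F

/-!
Sandwiching between the spectral projections turns everything into phases: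
`E_a α_x(F) E_b = e^{i(⟨a,x⟩ - ⟨b,x⟩)} E_a F E_b`. For a skew `Q` this makes
`E_a F_Q = E_a α_{Qa}(F)` and `F_Q E_b = α_{Qb}(F) E_b`, so the `(a, b)` matrix element of
`F_Q G_{-Q}` is that of `α_{Qa}(F) α_{-Qb}(G)`, and the one of `G_{-Q} F_Q` is that of
`α_{-Qa}(G) α_{Qb}(F)`, i.e. (by hypothesis) of `α_{Qb}(F) α_{-Qa}(G)`. Both equal
`E_a F U(-Qa-Qb) G E_b`, because skewness makes the remaining phases cancel.
-/

theorem eq_of_forall_mul_mul_eq {R ι : Type*} [Semiring R] {s : Finset ι} {e : ι → R}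
    (hsum : ∑ i ∈ s, e i = 1) {x y : R}
    (h : ∀ i ∈ s, ∀ j ∈ s, e i * x * e j = e i * y * e j) : x = y := by
  have expand : ∀ z : R, z = ∑ i ∈ s, ∑ j ∈ s, e i * z * e j := fun z => by
    simp only [← Finset.mul_sum, ← Finset.sum_mul, hsum, one_mul, mul_one]
  rw [expand x, expand y]
  exact Finset.sum_congr rfl fun i hi => Finset.sum_congr rfl fun j hj => h i hi j hj

theorem mul_sum_mul_of_orthogonal {R ι : Type*} [Semiring R] {s : Finset ι} {e : ι → R}
    (hproj : ∀ i ∈ s, e i * e i = e i) (horth : ∀ i ∈ s, ∀ j ∈ s, i ≠ j → e i * e j = 0)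
    {i : ι} (hi : i ∈ s) (f : ι → R) :
    e i * ∑ j ∈ s, e j * f j = e i * f i := by
  rw [Finset.mul_sum, Finset.sum_eq_single_of_mem i hi, ← mul_assoc, hproj i hi]
  intro j hj hji
  rw [← mul_assoc, horth i hi j hj (Ne.symm hji), zero_mul]

section Spectral

variable {d : ℕ} {H : Type*} [NormedAddCommGroup H] [InnerProductSpace ℂ H]
  {S : Finset (Fin d → ℝ)} {E : (Fin d → ℝ) → (H →L[ℂ] H)}
  {B : LinearMap.BilinForm ℝ (Fin d → ℝ)}

theorem uop_mul_proj (hproj : ∀ p ∈ S, E p * E p = E p)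
    (horth : ∀ p ∈ S, ∀ q ∈ S, p ≠ q → E p * E q = 0) {r : Fin d → ℝ} (hr : r ∈ S)
    (x : Fin d → ℝ) :
    Uop S E B x * E r = Complex.exp (Complex.I * (B r x : ℝ)) • E r := by
  rw [Uop, Finset.sum_mul, Finset.sum_eq_single_of_mem r hr, smul_mul_assoc, hproj r hr]
  intro p hp hpr
  rw [smul_mul_assoc, horth p hp r hr hpr, smul_zero]

theorem proj_mul_uop (hproj : ∀ p ∈ S, E p * E p = E p)
    (horth : ∀ p ∈ S, ∀ q ∈ S, p ≠ q → E p * E q = 0) {r : Fin d → ℝ} (hr : r ∈ S)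
    (x : Fin d → ℝ) :
    E r * Uop S E B x = Complex.exp (Complex.I * (B r x : ℝ)) • E r := by
  rw [Uop, Finset.mul_sum, Finset.sum_eq_single_of_mem r hr, mul_smul_comm, hproj r hr]
  intro p hp hpr
  rw [mul_smul_comm, horth r hr p hp (Ne.symm hpr), smul_zero]

theorem uop_mul_uop (hproj : ∀ p ∈ S, E p * E p = E p)
    (horth : ∀ p ∈ S, ∀ q ∈ S, p ≠ q → E p * E q = 0) (x y : Fin d → ℝ) :
    Uop S E B x * Uop S E B y = Uop S E B (x + y) := by
  rw [Uop.eq_1 S E B y, Finset.mul_sum, Uop.eq_1 S E B (x + y)]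
  refine Finset.sum_congr rfl fun p hp => ?_
  rw [mul_smul_comm, uop_mul_proj hproj horth hp, smul_smul, ← Complex.exp_add, map_add]
  push_cast
  ring_nf

theorem proj_mul_adAct_mul_proj (hproj : ∀ p ∈ S, E p * E p = E p)
    (horth : ∀ p ∈ S, ∀ q ∈ S, p ≠ q → E p * E q = 0) {a b : Fin d → ℝ} (ha : a ∈ S)
    (hb : b ∈ S) (x : Fin d → ℝ) (F : H →L[ℂ] H) :
    E a * adAct S E B x F * E b
      = Complex.exp (Complex.I * (B a x - B b x : ℝ)) • (E a * F * E b) := by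
  calc E a * adAct S E B x F * E b
      = E a * Uop S E B x * F * (Uop S E B (-x) * E b) := by simp only [adAct, mul_assoc]
    _ = _ := by
      rw [proj_mul_uop hproj horth ha, uop_mul_proj hproj horth hb, smul_mul_assoc,
        smul_mul_assoc, mul_smul_comm, smul_smul, ← Complex.exp_add, map_neg]
      push_cast
      ring_nf

theorem proj_mul_adAct_mul_adAct_mul_proj (hproj : ∀ p ∈ S, E p * E p = E p)
    (horth : ∀ p ∈ S, ∀ q ∈ S, p ≠ q → E p * E q = 0) {a b : Fin d → ℝ} (ha : a ∈ S)
    (hb : b ∈ S) (x y : Fin d → ℝ) (F G : H →L[ℂ] H) :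
    E a * (adAct S E B x F * adAct S E B y G) * E b
      = Complex.exp (Complex.I * (B a x - B b y : ℝ))
          • (E a * F * Uop S E B (-x + y) * G * E b) := by
  calc E a * (adAct S E B x F * adAct S E B y G) * E b
      = E a * Uop S E B x * F * (Uop S E B (-x) * Uop S E B y) * G * (Uop S E B (-y) * E b) := by
        simp only [adAct, mul_assoc]
    _ = _ := by
      rw [proj_mul_uop hproj horth ha, uop_mul_uop hproj horth, uop_mul_proj hproj horth hb]
      simp only [smul_mul_assoc, mul_smul_comm, smul_smul, ← Complex.exp_add, map_neg]
      push_cast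
      ring_nf

variable {Q : (Fin d → ℝ) →ₗ[ℝ] (Fin d → ℝ)}

theorem proj_mul_warp (hproj : ∀ p ∈ S, E p * E p = E p)
    (horth : ∀ p ∈ S, ∀ q ∈ S, p ≠ q → E p * E q = 0) {a : Fin d → ℝ} (ha : a ∈ S)
    (F : H →L[ℂ] H) :
    E a * warp S E B Q F = E a * adAct S E B (Q a) F :=
  mul_sum_mul_of_orthogonal hproj horth ha _

theorem proj_mul_adAct_mul_proj_left_eq_right (hproj : ∀ p ∈ S, E p * E p = E p)
    (horth : ∀ p ∈ S, ∀ q ∈ S, p ≠ q → E p * E q = 0)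
    (hskew : ∀ p q, B q (Q p) = - B p (Q q)) {a b : Fin d → ℝ} (ha : a ∈ S) (hb : b ∈ S)
    (F : H →L[ℂ] H) :
    E a * adAct S E B (Q a) F * E b = E a * adAct S E B (Q b) F * E b := by
  rw [proj_mul_adAct_mul_proj hproj horth ha hb, proj_mul_adAct_mul_proj hproj horth ha hb]
  congr 4
  linarith [hskew a a, hskew b b, hskew a b]

theorem warp_mul_proj (hproj : ∀ p ∈ S, E p * E p = E p)
    (horth : ∀ p ∈ S, ∀ q ∈ S, p ≠ q → E p * E q = 0) (hsum : ∑ p ∈ S, E p = 1)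
    (hskew : ∀ p q, B q (Q p) = - B p (Q q)) {b : Fin d → ℝ} (hb : b ∈ S)
    (F : H →L[ℂ] H) :
    warp S E B Q F * E b = adAct S E B (Q b) F * E b := by
  calc warp S E B Q F * E b
      = ∑ p ∈ S, E p * adAct S E B (Q b) F * E b := by
        rw [warp, Finset.sum_mul]
        exact Finset.sum_congr rfl fun p hp =>
          proj_mul_adAct_mul_proj_left_eq_right hproj horth hskew hp hb F
    _ = adAct S E B (Q b) F * E b := by rw [← Finset.sum_mul, ← Finset.sum_mul, hsum, one_mul]

theorem proj_mul_warp_mul_warp_mul_proj (hproj : ∀ p ∈ S, E p * E p = E p)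
    (horth : ∀ p ∈ S, ∀ q ∈ S, p ≠ q → E p * E q = 0) (hsum : ∑ p ∈ S, E p = 1)
    {Q' : (Fin d → ℝ) →ₗ[ℝ] (Fin d → ℝ)} (hskew' : ∀ p q, B q (Q' p) = - B p (Q' q))
    {a b : Fin d → ℝ} (ha : a ∈ S) (hb : b ∈ S) (F G : H →L[ℂ] H) :
    E a * (warp S E B Q F * warp S E B Q' G) * E b
      = E a * (adAct S E B (Q a) F * adAct S E B (Q' b) G) * E b := by
  simp only [← mul_assoc]
  rw [proj_mul_warp hproj horth ha, mul_assoc _ (warp S E B Q' G),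
    warp_mul_proj hproj horth hsum hskew' hb, ← mul_assoc]

theorem proj_mul_adAct_mul_adAct_neg_mul_proj_swap (hproj : ∀ p ∈ S, E p * E p = E p)
    (horth : ∀ p ∈ S, ∀ q ∈ S, p ≠ q → E p * E q = 0)
    (hskew : ∀ p q, B q (Q p) = - B p (Q q)) {a b : Fin d → ℝ} (ha : a ∈ S) (hb : b ∈ S)
    (F G : H →L[ℂ] H) :
    E a * (adAct S E B (Q a) F * adAct S E B (-(Q b)) G) * E b
      = E a * (adAct S E B (Q b) F * adAct S E B (-(Q a)) G) * E b := by
  rw [proj_mul_adAct_mul_adAct_mul_proj hproj horth ha hb,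
    proj_mul_adAct_mul_adAct_mul_proj hproj horth ha hb, add_comm (-Q a)]
  congr 4
  simp only [map_neg]
  linarith [hskew a a, hskew b b, hskew a b]

end Spectral

theorem warp_commute_general {d : ℕ} {H : Type*} [NormedAddCommGroup H]
    [InnerProductSpace ℂ H]
    (S : Finset (Fin d → ℝ)) (E : (Fin d → ℝ) → (H →L[ℂ] H))
    (hproj : ∀ p ∈ S, E p * E p = E p)
    (horth : ∀ p ∈ S, ∀ q ∈ S, p ≠ q → E p * E q = 0)
    (hsum : ∑ p ∈ S, E p = 1)
    (B : LinearMap.BilinForm ℝ (Fin d → ℝ))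
    (Q : (Fin d → ℝ) →ₗ[ℝ] (Fin d → ℝ))
    (hskew : ∀ p q, B q (Q p) = - B p (Q q))
    (F G : H →L[ℂ] H)
    (hcomm : ∀ p ∈ S, ∀ q ∈ S,
      adAct S E B (Q p) F * adAct S E B (-(Q q)) G
        = adAct S E B (-(Q q)) G * adAct S E B (Q p) F) :
    warp S E B Q F * warp S E B (-Q) G = warp S E B (-Q) G * warp S E B Q F := by
  have hskew_neg : ∀ p q, B q ((-Q) p) = - B p ((-Q) q) := fun p q => by
    simp only [LinearMap.neg_apply, map_neg, hskew p q]
  refine eq_of_forall_mul_mul_eq hsum fun a ha b hb => ?_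
  calc E a * (warp S E B Q F * warp S E B (-Q) G) * E b
      = E a * (adAct S E B (Q a) F * adAct S E B (-(Q b)) G) * E b :=
        proj_mul_warp_mul_warp_mul_proj hproj horth hsum hskew_neg ha hb F G
    _ = E a * (adAct S E B (Q b) F * adAct S E B (-(Q a)) G) * E b :=
        proj_mul_adAct_mul_adAct_neg_mul_proj_swap hproj horth hskew ha hb F G
    _ = E a * (adAct S E B (-(Q a)) G * adAct S E B (Q b) F) * E b := by rw [hcomm b hb a ha]
    _ = E a * (warp S E B (-Q) G * warp S E B Q F) * E b := by
        rw [proj_mul_warp_mul_warp_mul_proj hproj horth hsum hskew ha hb, LinearMap.neg_apply]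

/-- Lemma 2.3 (finite-dimensional): if `α_{Qp}(F)` commutes with `α_{−Qq}(G)` for all
`p, q ∈ S`, then `F_Q` commutes with `G_{−Q}`. -/
theorem warp_commute {d : ℕ} {H : Type*} [NormedAddCommGroup H]
    [InnerProductSpace ℂ H] [FiniteDimensional ℂ H]
    (S : Finset (Fin d → ℝ)) (E : (Fin d → ℝ) → (H →L[ℂ] H))
    (hproj : ∀ p ∈ S, E p * E p = E p)
    (horth : ∀ p ∈ S, ∀ q ∈ S, p ≠ q → E p * E q = 0)
    (hsum : ∑ p ∈ S, E p = 1)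
    (B : LinearMap.BilinForm ℝ (Fin d → ℝ)) (hB : ∀ x y, B x y = B y x)
    (Q : (Fin d → ℝ) →ₗ[ℝ] (Fin d → ℝ))
    (hskew : ∀ p q, B q (Q p) = - B p (Q q))
    (F G : H →L[ℂ] H)
    (hcomm : ∀ p ∈ S, ∀ q ∈ S,
      adAct S E B (Q p) F * adAct S E B (-(Q q)) G
        = adAct S E B (-(Q q)) G * adAct S E B (Q p) F) :
    warp S E B Q F * warp S E B (-Q) G = warp S E B (-Q) G * warp S E B Q F :=
  warp_commute_general S E hproj horth hsum B Q hskew F G hcomm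
end

section
/- Velocity-support separation: let v = (1, v⃗) and v' = (1, v⃗') in ℝ^d with v' − v lying in the interior of the standard wedge W_0. Then for every t < 0, every point of W_0 + t v is spacelike separated from every point of (−W_0) + t v'. -/
/-- Minkowski inner product on ℝ^d. -/
noncomputable def Mink (d : ℕ) (x y : Fin (d + 2) → ℝ) : ℝ :=
  x 0 * y 0 - ∑ i ∈ Finset.univ.erase (0 : Fin (d + 2)), x i * y i

/-- The standard wedge `W₀ = {x : x 1 ≥ |x 0|}`. -/
def W0 (d : ℕ) : Set (Fin (d + 2) → ℝ) := {x | |x 0| ≤ x 1}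

/-!
The separation vector `(a + t v) - (b + t v')` equals `a + (-b) + (-t)(v' - v)`: two points of the
closed cone `W₀` plus a point of its interior, hence a point of the interior `|x₀| < x₁`. Such a
point is spacelike, since `x₀² < x₁² ≤ Σ_{i ≥ 1} xᵢ²`.
-/

namespace W0

variable {d : ℕ} {x y : Fin (d + 2) → ℝ}

theorem neg_mem_iff : -x ∈ W0 d ↔ |x 0| ≤ -x 1 := by
  simp [W0]

theorem add_mem (hx : x ∈ W0 d) (hy : y ∈ W0 d) : x + y ∈ W0 d :=
  show |x 0 + y 0| ≤ x 1 + y 1 from (abs_add_le _ _).trans (add_le_add hx hy)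

theorem abs_add_lt_of_mem (hx : x ∈ W0 d) (hy : |y 0| < y 1) : |(x + y) 0| < (x + y) 1 :=
  (abs_add_le _ _).trans_lt (add_lt_add_of_le_of_lt hx hy)

end W0

theorem abs_smul_apply_zero_lt {d : ℕ} {y : Fin (d + 2) → ℝ} {c : ℝ} (hc : 0 < c)
    (hy : |y 0| < y 1) : |(c • y) 0| < (c • y) 1 := by
  simpa [abs_mul, abs_of_pos hc] using mul_lt_mul_of_pos_left hy hc

theorem mink_self_neg_of_abs_lt {d : ℕ} {x : Fin (d + 2) → ℝ} (hx : |x 0| < x 1) :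
    Mink d x x < 0 := by
  have h_spatial : x 1 * x 1 ≤ ∑ i ∈ Finset.univ.erase 0, x i * x i :=
    Finset.single_le_sum (f := fun i => x i * x i) (fun i _ => mul_self_nonneg _) (by simp)
  have h_time : x 0 * x 0 < x 1 * x 1 := by
    rw [← abs_mul_abs_self (x 0)]
    exact mul_self_lt_mul_self (abs_nonneg _) hx
  unfold Mink
  linarith

theorem velocity_support_spacelike_general (d : ℕ)
    (v v' : Fin (d + 2) → ℝ)
    (hint : |(v' - v) 0| < (v' - v) 1)
    (t : ℝ) (ht : t < 0)
    (a b : Fin (d + 2) → ℝ) (ha : a ∈ W0 d) (hb : |b 0| ≤ - b 1) :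
    Mink d ((a + t • v) - (b + t • v')) ((a + t • v) - (b + t • v')) < 0 := by
  have hsep : (a + t • v) - (b + t • v') = (a + -b) + (-t) • (v' - v) := by module
  rw [hsep]
  exact mink_self_neg_of_abs_lt <| W0.abs_add_lt_of_mem (W0.add_mem ha (W0.neg_mem_iff.mpr hb))
    (abs_smul_apply_zero_lt (neg_pos.mpr ht) hint)

/-- Velocity-support separation: if `v = (1, v⃗)`, `v' = (1, v⃗')` with `v' − v` in the
interior of `W₀`, then for `t < 0` every point of `W₀ + t v` is spacelike separated from
every point of `−W₀ + t v'`. -/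
theorem velocity_support_spacelike (d : ℕ)
    (v v' : Fin (d + 2) → ℝ) (hv : v 0 = 1) (hv' : v' 0 = 1)
    (hint : |(v' - v) 0| < (v' - v) 1)
    (t : ℝ) (ht : t < 0)
    (a b : Fin (d + 2) → ℝ) (ha : a ∈ W0 d) (hb : |b 0| ≤ - b 1) :
    Mink d ((a + t • v) - (b + t • v')) ((a + t • v) - (b + t • v')) < 0 :=
  velocity_support_spacelike_general d v v' hint t ht a b ha hb
end
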